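/- Let N ≥ 2, let w₁, …, w_N be nonnegative reals summing to 1, let U₁ = I, let U₂ be a diagonal 2×2 unitary matrix, and let U₃, …, U_N be arbitrary 2×2 unitary matrices, with E(ρ) = Σₖ wₖ Uₖ ρ Uₖ†. Let ρ_x = (1/2)[[1,1],[1,1]], ρ_y = (1/2)[[1,−i],[i,1]], ρ_z = [[1,0],[0,0]] be the +1 eigenstates of X, Y, Z respectively. Then ‖E(ρ_x) − (1/2)I‖_∞ + ‖E(ρ_y) − (1/2)I‖_∞ + ‖E(ρ_z) − (1/2)I‖_∞ ≥ 3w₁ + w₂ + Σ_{k=3}^{N} wₖ − 3/2. In particular, at least one of the three states |x+⟩, |y+⟩, |z+⟩ is encrypted with operator-norm error at least (3w₁ + w₂ + Σ_{k≥3} wₖ − 3/2)/3. -/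

import Mathlib

open Matrix
open scoped ComplexOrder

noncomputable section

/-- The operator norm of a matrix, i.e. the norm of the induced operator on Euclidean space;
for a Hermitian matrix this is the maximum of the absolute values of its eigenvalues. -/
def opNorm {m : Type*} [Fintype m] [DecidableEq m] (A : Matrix m m ℂ) : ℝ :=
  ‖Matrix.toEuclideanCLM (𝕜 := ℂ) A‖

/-- The +1 eigenstate of X: `ρ_x = (1/2)[[1,1],[1,1]]`. -/
def rhoX : Matrix (Fin 2) (Fin 2) ℂ := (1/2 : ℂ) • !![1, 1; 1, 1]
/-- The +1 eigenstate of Y: `ρ_y = (1/2)[[1,−i],[i,1]]`. -/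
def rhoY : Matrix (Fin 2) (Fin 2) ℂ := (1/2 : ℂ) • !![1, -Complex.I; Complex.I, 1]
/-- The +1 eigenstate of Z: `ρ_z = [[1,0],[0,0]]`. -/
def rhoZ : Matrix (Fin 2) (Fin 2) ℂ := !![1, 0; 0, 0]

/-! ### Auxiliary lemmas -/

lemma aux_quad_le_opNorm (A : Matrix (Fin 2) (Fin 2) ℂ) (v : Fin 2 → ℂ)
    (hv : Complex.normSq (v 0) + Complex.normSq (v 1) = 1) :
    (star v ⬝ᵥ (A *ᵥ v)).re ≤ opNorm A := by
  set x : EuclideanSpace ℂ (Fin 2) := (WithLp.equiv 2 _).symm v with hx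
  have hnx : ‖x‖ = 1 := by
    rw [EuclideanSpace.norm_eq]
    simp only [hx, WithLp.equiv_symm_apply, WithLp.ofLp_toLp, Fin.sum_univ_two]
    rw [show ‖v 0‖ ^ 2 + ‖v 1‖ ^ 2 = 1 by
      simp only [Complex.sq_norm]; exact hv]
    exact Real.sqrt_one
  have key : inner ℂ x (Matrix.toEuclideanCLM (𝕜 := ℂ) A x) = star v ⬝ᵥ (A *ᵥ v) := by
    rw [hx, WithLp.equiv_symm_apply, Matrix.toEuclideanCLM_toLp]
    simp [PiLp.inner_apply, dotProduct, Matrix.mulVec,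
      Matrix.toLin'_apply, mul_comm]
  have h1 : (inner ℂ x (Matrix.toEuclideanCLM (𝕜 := ℂ) A x) : ℂ).re ≤ opNorm A := by
    calc (inner ℂ x (Matrix.toEuclideanCLM (𝕜 := ℂ) A x) : ℂ).re
        ≤ ‖(inner ℂ x (Matrix.toEuclideanCLM (𝕜 := ℂ) A x) : ℂ)‖ := Complex.re_le_norm _
      _ ≤ ‖x‖ * ‖Matrix.toEuclideanCLM (𝕜 := ℂ) A x‖ := norm_inner_le_norm _ _
      _ ≤ ‖x‖ * (‖Matrix.toEuclideanCLM (𝕜 := ℂ) A‖ * ‖x‖) := by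
          gcongr; exact (Matrix.toEuclideanCLM (𝕜 := ℂ) A).le_opNorm x
      _ = opNorm A := by rw [hnx]; ring_nf; rfl
  rw [← key]; exact h1

lemma aux_quad_outer (U : Matrix (Fin 2) (Fin 2) ℂ) (v ψ : Fin 2 → ℂ) :
    star v ⬝ᵥ ((U * vecMulVec ψ (star ψ) * Uᴴ) *ᵥ v)
      = (star v ⬝ᵥ (U *ᵥ ψ)) * (starRingEnd ℂ) (star v ⬝ᵥ (U *ᵥ ψ)) := by
  simp only [Matrix.mul_apply, Matrix.mulVec, dotProduct, Matrix.vecMulVec_apply,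
    Fin.sum_univ_two, Matrix.conjTranspose_apply, Pi.star_apply, map_add, _root_.map_mul,
    Complex.star_def, Complex.conj_conj]
  ring

lemma aux_state_bound (N : ℕ) (w : Fin N → ℝ)
    (U : Fin N → Matrix (Fin 2) (Fin 2) ℂ)
    (ψ : Fin 2 → ℂ) (hψ : Complex.normSq (ψ 0) + Complex.normSq (ψ 1) = 1)
    (ρ : Matrix (Fin 2) (Fin 2) ℂ) (hρ : ρ = vecMulVec ψ (star ψ)) :
    (∑ k, w k * Complex.normSq (star ψ ⬝ᵥ (U k *ᵥ ψ))) - 1/2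
      ≤ opNorm ((∑ k, w k • (U k * ρ * (U k)ᴴ)) - (1/2 : ℝ) • (1 : Matrix (Fin 2) (Fin 2) ℂ)) := by
  refine le_trans (le_of_eq ?_) (aux_quad_le_opNorm _ ψ hψ)
  have hψψ : star ψ ⬝ᵥ ψ = 1 := by
    simp only [dotProduct, Fin.sum_univ_two, Pi.star_apply, Complex.star_def]
    rw [mul_comm ((starRingEnd ℂ) (ψ 0)), mul_comm ((starRingEnd ℂ) (ψ 1)),
      Complex.mul_conj, Complex.mul_conj, ← Complex.ofReal_add, hψ, Complex.ofReal_one]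
  have expand : star ψ ⬝ᵥ (((∑ k, w k • (U k * ρ * (U k)ᴴ))
      - (1/2 : ℝ) • (1 : Matrix (Fin 2) (Fin 2) ℂ)) *ᵥ ψ)
      = (∑ k, (w k : ℂ) * ((star ψ ⬝ᵥ (U k *ᵥ ψ)) * (starRingEnd ℂ) (star ψ ⬝ᵥ (U k *ᵥ ψ))))
        - (1/2 : ℂ) := by
    rw [Matrix.sub_mulVec, dotProduct_sub]
    congr 1
    · rw [show (∑ k, w k • (U k * ρ * (U k)ᴴ)) *ᵥ ψ = ∑ k, (w k • (U k * ρ * (U k)ᴴ)) *ᵥ ψ by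
        ext i
        simp only [Matrix.mulVec, dotProduct, Finset.sum_apply, Matrix.sum_apply,
          Finset.sum_mul]
        exact Finset.sum_comm]
      rw [show star ψ ⬝ᵥ (∑ k, (w k • (U k * ρ * (U k)ᴴ)) *ᵥ ψ)
            = ∑ k, star ψ ⬝ᵥ ((w k • (U k * ρ * (U k)ᴴ)) *ᵥ ψ) by
        simp only [dotProduct, Finset.mul_sum, Finset.sum_apply]
        exact Finset.sum_comm]
      refine Finset.sum_congr rfl fun k _ => ?_
      rw [show w k • (U k * ρ * (U k)ᴴ) = (w k : ℂ) • (U k * ρ * (U k)ᴴ) by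
        ext i j; simp [Complex.real_smul]]
      rw [Matrix.smul_mulVec, dotProduct_smul, smul_eq_mul, hρ, aux_quad_outer]
    · rw [show (1/2 : ℝ) • (1 : Matrix (Fin 2) (Fin 2) ℂ) = (1/2 : ℂ) • 1 by
        ext i j; simp [Complex.real_smul]]
      rw [Matrix.smul_mulVec, dotProduct_smul, Matrix.one_mulVec, hψψ,
        smul_eq_mul, mul_one]
  rw [expand]
  simp only [Complex.sub_re, Complex.re_sum, Complex.mul_conj, ← Complex.ofReal_mul,
    Complex.ofReal_re]
  norm_num

lemma aux_unitary_key (U : Matrix (Fin 2) (Fin 2) ℂ) (hU : U ∈ Matrix.unitaryGroup (Fin 2) ℂ) :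
    4 ≤ Complex.normSq (U 0 0 + U 0 1 + U 1 0 + U 1 1)
      + Complex.normSq (U 0 0 + U 1 1 + Complex.I * (U 0 1 - U 1 0))
      + 4 * Complex.normSq (U 0 0) := by
  have h1 : star U * U = 1 := hU.1
  have h2 : U * star U = 1 := hU.2
  have e1 := congrFun (congrFun h1 0) 0
  have e2 := congrFun (congrFun h1 0) 1
  have e3 := congrFun (congrFun h1 1) 1
  have f1 := congrFun (congrFun h2 0) 0
  have f2 := congrFun (congrFun h2 0) 1
  simp only [Matrix.mul_apply, Matrix.star_apply, Fin.sum_univ_two, Matrix.one_apply,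
    Complex.star_def, Fin.zero_eq_one_iff, Fin.one_eq_zero_iff,
    Nat.succ_ne_self, ite_true, ite_false, reduceCtorEq] at e1 e2 e3 f1 f2
  rw [Complex.ext_iff] at e1 e2 e3 f1 f2
  simp only [Complex.add_re, Complex.add_im, Complex.mul_re, Complex.mul_im,
    Complex.conj_re, Complex.conj_im, Complex.one_re, Complex.one_im, Complex.zero_re,
    Complex.zero_im] at e1 e2 e3 f1 f2
  simp only [Complex.normSq_apply, Complex.add_re,
    Complex.add_im, Complex.sub_re, Complex.sub_im, Complex.mul_re, Complex.mul_im,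
    Complex.I_re, Complex.I_im]
  obtain ⟨e11, e12⟩ := e1; obtain ⟨e21, e22⟩ := e2; obtain ⟨e31, e32⟩ := e3
  obtain ⟨f11, f12⟩ := f1; obtain ⟨f21, f22⟩ := f2
  nlinarith [sq_nonneg ((U 0 0).re + (U 1 1).re), sq_nonneg ((U 0 0).im + (U 1 1).im),
    e11, e21, e22, e31, f11, f21, f22]

lemma aux_mulself : (Real.sqrt 2)⁻¹ * (Real.sqrt 2)⁻¹ = 1/2 := by
  rw [← mul_inv, Real.mul_self_sqrt (by norm_num)]; norm_num

lemma aux_hrhoX (s : ℝ) (hs : s * s = 1/2) :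
    rhoX = vecMulVec ![(s:ℂ), (s:ℂ)] (star ![(s:ℂ), (s:ℂ)]) := by
  have hsc : (s:ℂ) * s = 1/2 := by rw [← Complex.ofReal_mul, hs]; norm_num
  ext i j
  fin_cases i <;> fin_cases j <;>
    simp [rhoX, Matrix.vecMulVec_apply, Complex.conj_ofReal] <;>
    linear_combination -hsc

lemma aux_hrhoY (s : ℝ) (hs : s * s = 1/2) :
    rhoY = vecMulVec ![(s:ℂ), (s:ℂ) * Complex.I] (star ![(s:ℂ), (s:ℂ) * Complex.I]) := by
  have hsc : (s:ℂ) * s = 1/2 := by rw [← Complex.ofReal_mul, hs]; norm_num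
  ext i j
  fin_cases i <;> fin_cases j <;>
    simp [rhoY, Matrix.vecMulVec_apply, Complex.conj_ofReal, Complex.conj_I] <;>
    first
      | linear_combination -hsc
      | linear_combination -Complex.I * hsc
      | linear_combination -hsc + (s:ℂ)^2 * Complex.I_sq

lemma aux_hrhoZ : rhoZ = vecMulVec ![(1:ℂ), 0] (star ![(1:ℂ), 0]) := by
  ext i j
  fin_cases i <;> fin_cases j <;> simp [rhoZ, Matrix.vecMulVec_apply]

lemma aux_cx (U : Matrix (Fin 2) (Fin 2) ℂ) (s : ℝ) (hs : s * s = 1/2) :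
    star ![(s:ℂ), (s:ℂ)] ⬝ᵥ (U *ᵥ ![(s:ℂ), (s:ℂ)])
      = (U 0 0 + U 0 1 + U 1 0 + U 1 1) * (1/2) := by
  have hsc : (s:ℂ) * s = 1/2 := by rw [← Complex.ofReal_mul, hs]; norm_num
  simp only [dotProduct, Matrix.mulVec, Fin.sum_univ_two, Pi.star_apply,
    Complex.star_def, Matrix.cons_val_zero, Matrix.cons_val_one, Matrix.head_cons,
    Complex.conj_ofReal]
  linear_combination (U 0 0 + U 0 1 + U 1 0 + U 1 1) * hsc

lemma aux_cy (U : Matrix (Fin 2) (Fin 2) ℂ) (s : ℝ) (hs : s * s = 1/2) :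
    star ![(s:ℂ), (s:ℂ) * Complex.I] ⬝ᵥ (U *ᵥ ![(s:ℂ), (s:ℂ) * Complex.I])
      = (U 0 0 + U 1 1 + Complex.I * (U 0 1 - U 1 0)) * (1/2) := by
  have hsc : (s:ℂ) * s = 1/2 := by rw [← Complex.ofReal_mul, hs]; norm_num
  simp only [dotProduct, Matrix.mulVec, Fin.sum_univ_two, Pi.star_apply,
    Complex.star_def, Matrix.cons_val_zero, Matrix.cons_val_one, Matrix.head_cons,
    _root_.map_mul, Complex.conj_ofReal, Complex.conj_I]
  linear_combination (U 0 0 + U 0 1 * Complex.I - U 1 0 * Complex.I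
      - U 1 1 * Complex.I^2) * hsc - (U 1 1 / 2) * Complex.I_sq

lemma aux_cz (U : Matrix (Fin 2) (Fin 2) ℂ) :
    star ![(1:ℂ), 0] ⬝ᵥ (U *ᵥ ![(1:ℂ), 0]) = U 0 0 := by
  simp [dotProduct, Matrix.mulVec, Fin.sum_univ_two, vecHead, vecTail, Pi.star_apply]

lemma aux_normSq_half : Complex.normSq (1/2 : ℂ) = 1/4 := by
  rw [show (1/2 : ℂ) = ((1/2 : ℝ) : ℂ) by norm_num, Complex.normSq_ofReal]; norm_num

lemma aux_key_ineq (U : Matrix (Fin 2) (Fin 2) ℂ) (hU : U ∈ Matrix.unitaryGroup (Fin 2) ℂ)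
    (s : ℝ) (hs : s * s = 1/2) :
    1 ≤ Complex.normSq (star ![(s:ℂ), (s:ℂ)] ⬝ᵥ (U *ᵥ ![(s:ℂ), (s:ℂ)]))
      + Complex.normSq (star ![(s:ℂ), (s:ℂ) * Complex.I] ⬝ᵥ (U *ᵥ ![(s:ℂ), (s:ℂ) * Complex.I]))
      + Complex.normSq (star ![(1:ℂ), 0] ⬝ᵥ (U *ᵥ ![(1:ℂ), 0])) := by
  rw [aux_cx U s hs, aux_cy U s hs, aux_cz U, Complex.normSq_mul, Complex.normSq_mul,
    aux_normSq_half]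
  have := aux_unitary_key U hU
  linarith

/-- If `U₁ = I` and `U₂` is diagonal, then the encryption errors of the three states
`|x+⟩, |y+⟩, |z+⟩` under `E(ρ) = Σₖ wₖ Uₖ ρ Uₖ†` sum to at least
`3w₁ + w₂ + Σ_{k≥3} wₖ − 3/2`; in particular one of the three states is encrypted with
operator-norm error at least a third of that. -/
theorem three_states_encryption_error (N : ℕ) (hN : 2 ≤ N)
    (w : Fin N → ℝ) (hw : ∀ k, 0 ≤ w k) (hsum : ∑ k, w k = 1)
    (U : Fin N → Matrix (Fin 2) (Fin 2) ℂ)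
    (hU : ∀ k, U k ∈ Matrix.unitaryGroup (Fin 2) ℂ)
    (hU0 : U ⟨0, by omega⟩ = 1) (hU1 : (U ⟨1, by omega⟩).IsDiag) :
    3 * w ⟨0, by omega⟩ + w ⟨1, by omega⟩
        + (∑ k ∈ Finset.univ.filter (fun k : Fin N => 2 ≤ (k : ℕ)), w k) - 3/2
      ≤ opNorm ((∑ k, w k • (U k * rhoX * (U k)ᴴ))
            - (1/2 : ℝ) • (1 : Matrix (Fin 2) (Fin 2) ℂ))
        + opNorm ((∑ k, w k • (U k * rhoY * (U k)ᴴ))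
            - (1/2 : ℝ) • (1 : Matrix (Fin 2) (Fin 2) ℂ))
        + opNorm ((∑ k, w k • (U k * rhoZ * (U k)ᴴ))
            - (1/2 : ℝ) • (1 : Matrix (Fin 2) (Fin 2) ℂ))
    ∧ ((3 * w ⟨0, by omega⟩ + w ⟨1, by omega⟩
          + (∑ k ∈ Finset.univ.filter (fun k : Fin N => 2 ≤ (k : ℕ)), w k) - 3/2) / 3
        ≤ opNorm ((∑ k, w k • (U k * rhoX * (U k)ᴴ))
            - (1/2 : ℝ) • (1 : Matrix (Fin 2) (Fin 2) ℂ))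
      ∨ (3 * w ⟨0, by omega⟩ + w ⟨1, by omega⟩
          + (∑ k ∈ Finset.univ.filter (fun k : Fin N => 2 ≤ (k : ℕ)), w k) - 3/2) / 3
        ≤ opNorm ((∑ k, w k • (U k * rhoY * (U k)ᴴ))
            - (1/2 : ℝ) • (1 : Matrix (Fin 2) (Fin 2) ℂ))
      ∨ (3 * w ⟨0, by omega⟩ + w ⟨1, by omega⟩
          + (∑ k ∈ Finset.univ.filter (fun k : Fin N => 2 ≤ (k : ℕ)), w k) - 3/2) / 3
        ≤ opNorm ((∑ k, w k • (U k * rhoZ * (U k)ᴴ))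
            - (1/2 : ℝ) • (1 : Matrix (Fin 2) (Fin 2) ℂ))) := by
  set s : ℝ := (Real.sqrt 2)⁻¹ with hsdef
  have hs : s * s = 1/2 := aux_mulself
  set ψx : Fin 2 → ℂ := ![(s:ℂ), (s:ℂ)] with hψxdef
  set ψy : Fin 2 → ℂ := ![(s:ℂ), (s:ℂ) * Complex.I] with hψydef
  set ψz : Fin 2 → ℂ := ![(1:ℂ), 0] with hψzdef
  have hnx : Complex.normSq (ψx 0) + Complex.normSq (ψx 1) = 1 := by
    simp [hψxdef, Complex.normSq_ofReal]; linarith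
  have hny : Complex.normSq (ψy 0) + Complex.normSq (ψy 1) = 1 := by
    simp [hψydef, Complex.normSq_ofReal, Complex.normSq_mul, Complex.normSq_I]; linarith
  have hnz : Complex.normSq (ψz 0) + Complex.normSq (ψz 1) = 1 := by
    simp [hψzdef]
  -- the three quadratic-form lower bounds
  have hbx := aux_state_bound N w U ψx hnx rhoX (aux_hrhoX s hs)
  have hby := aux_state_bound N w U ψy hny rhoY (aux_hrhoY s hs)
  have hbz := aux_state_bound N w U ψz hnz rhoZ aux_hrhoZ
  -- abbreviations for the fidelities
  set nx : Fin N → ℝ := fun k => Complex.normSq (star ψx ⬝ᵥ (U k *ᵥ ψx)) with hnxdef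
  set ny : Fin N → ℝ := fun k => Complex.normSq (star ψy ⬝ᵥ (U k *ᵥ ψy)) with hnydef
  set nz : Fin N → ℝ := fun k => Complex.normSq (star ψz ⬝ᵥ (U k *ᵥ ψz)) with hnzdef
  have hSk : ∀ k, 1 ≤ nx k + ny k + nz k := fun k => aux_key_ineq (U k) (hU k) s hs
  -- the k = 0 term
  set k0 : Fin N := ⟨0, by omega⟩ with hk0def
  set k1 : Fin N := ⟨1, by omega⟩ with hk1def
  have hk0v : (k0 : ℕ) = 0 := rfl
  have hk1v : (k1 : ℕ) = 1 := rfl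
  have hS0 : nx k0 + ny k0 + nz k0 = 3 := by
    have hx0 : nx k0 = 1 := by
      simp only [hnxdef, hU0]
      rw [aux_cx 1 s hs]
      simp [Matrix.one_apply, Complex.normSq_apply]
      norm_num
    have hy0 : ny k0 = 1 := by
      simp only [hnydef, hU0]
      rw [aux_cy 1 s hs]
      simp [Matrix.one_apply, Complex.normSq_apply]
      norm_num
    have hz0 : nz k0 = 1 := by
      simp only [hnzdef, hU0]
      rw [aux_cz 1]
      simp [Matrix.one_apply]
    rw [hx0, hy0, hz0]; norm_num
  -- the weighted sum of fidelities is at least 2 w₀ + 1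
  have hsum_ge : 2 * w k0 + 1 ≤ ∑ k, w k * (nx k + ny k + nz k) := by
    have h1 : ∑ k, w k * (nx k + ny k + nz k) - ∑ k, w k
        = ∑ k, w k * (nx k + ny k + nz k - 1) := by
      rw [← Finset.sum_sub_distrib]; congr 1; ext k; ring
    have h2 : w k0 * (nx k0 + ny k0 + nz k0 - 1) ≤ ∑ k, w k * (nx k + ny k + nz k - 1) :=
      Finset.single_le_sum (f := fun k => w k * (nx k + ny k + nz k - 1))
        (fun k _ => mul_nonneg (hw k) (by linarith [hSk k]))
        (Finset.mem_univ k0)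
    rw [hS0] at h2
    have := hw k0
    nlinarith [h1, h2, hsum]
  -- splitting the total weight
  have hsplit : ∑ k, w k = w k0 + w k1
      + ∑ k ∈ Finset.univ.filter (fun k : Fin N => 2 ≤ (k : ℕ)), w k := by
    have h := Finset.sum_filter_add_sum_filter_not Finset.univ
      (fun k : Fin N => 2 ≤ (k : ℕ)) w
    have hnotset : Finset.univ.filter (fun k : Fin N => ¬ 2 ≤ (k : ℕ)) = {k0, k1} := by
      ext k
      simp only [Finset.mem_filter, Finset.mem_univ, true_and, Finset.mem_insert,
        Finset.mem_singleton, Fin.ext_iff, hk0v, hk1v]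
      omega
    have hne : k0 ∉ ({k1} : Finset (Fin N)) := by
      simp only [Finset.mem_singleton]
      intro h'
      have := congrArg Fin.val h'
      omega
    rw [hnotset, Finset.sum_insert hne, Finset.sum_singleton] at h
    linarith
  -- expanding the weighted sum of fidelities
  have hsum_split : ∑ k, w k * (nx k + ny k + nz k)
      = (∑ k, w k * nx k) + (∑ k, w k * ny k) + (∑ k, w k * nz k) := by
    rw [← Finset.sum_add_distrib, ← Finset.sum_add_distrib]; congr 1; ext k; ring
  have main : 3 * w k0 + w k1
      + (∑ k ∈ Finset.univ.filter (fun k : Fin N => 2 ≤ (k : ℕ)), w k) - 3/2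
      ≤ opNorm ((∑ k, w k • (U k * rhoX * (U k)ᴴ))
            - (1/2 : ℝ) • (1 : Matrix (Fin 2) (Fin 2) ℂ))
        + opNorm ((∑ k, w k • (U k * rhoY * (U k)ᴴ))
            - (1/2 : ℝ) • (1 : Matrix (Fin 2) (Fin 2) ℂ))
        + opNorm ((∑ k, w k • (U k * rhoZ * (U k)ᴴ))
            - (1/2 : ℝ) • (1 : Matrix (Fin 2) (Fin 2) ℂ)) := by
    have e1 : 3 * w k0 + w k1
        + (∑ k ∈ Finset.univ.filter (fun k : Fin N => 2 ≤ (k : ℕ)), w k) - 3/2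
        = 2 * w k0 + (∑ k, w k) - 3/2 := by rw [hsplit]; ring
    rw [e1, hsum]
    have := hsum_ge
    rw [hsum_split] at this
    linarith [hbx, hby, hbz]
  refine ⟨main, ?_⟩
  by_contra hcon
  push_neg at hcon
  obtain ⟨h1, h2, h3⟩ := hcon
  linarith [main, h1, h2, h3]

end
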